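/- For the nonlinear exponential Hawkes process with inhibition, the integral of the realized intensity max(λ*, 0) over (T_k, T_{k+1}) equals m(T_{k+1} - T_k*) + b^{-1}(c - m)(e^{-b(T_k* - T_k)} - e^{-b(T_{k+1} - T_k)}), where T_k* is the restart time. -/

import Mathlib

/-!
For `c ≤ m` the underlying intensity `λ*` is nondecreasing, and for `c < 0` it vanishes exactly at
`T_k + b⁻¹ log((m - c)/m)`; for `c ≥ 0` it is nonnegative from `T_k` on. Either way `max(λ*, 0)`
is `0` on `(T_k, T_k*]` and `λ*` on `(T_k*, T_{k+1}]`, so the integral is that of `λ*` over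
`(T_k*, T_{k+1})`, computed from the primitive `m t - b⁻¹ (c - m) e^{-b(t - T_k)}`.
-/

open Real Set intervalIntegral

theorem integral_max_zero_eq_of_sign_change {f : ℝ → ℝ} {a s d : ℝ} (hf : Continuous f)
    (has : a ≤ s) (hsd : s ≤ d) (hneg : ∀ t ∈ Ioc a s, f t ≤ 0)
    (hpos : ∀ t ∈ Ioc s d, 0 ≤ f t) :
    ∫ t in a..d, max (f t) 0 = ∫ t in s..d, f t := by
  have hmax : Continuous fun t => max (f t) 0 := hf.max continuous_const
  rw [← integral_add_adjacent_intervals (hmax.intervalIntegrable a s)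
    (hmax.intervalIntegrable s d)]
  have hzero : ∫ t in a..s, max (f t) 0 = ∫ _ in a..s, (0 : ℝ) :=
    integral_congr_ae <| .of_forall fun t ht =>
      max_eq_right (hneg t (by rwa [uIoc_of_le has] at ht))
  have hself : ∫ t in s..d, max (f t) 0 = ∫ t in s..d, f t :=
    integral_congr_ae <| .of_forall fun t ht =>
      max_eq_left (hpos t (by rwa [uIoc_of_le hsd] at ht))
  rw [hzero, hself, integral_zero, zero_add]

noncomputable def underlyingIntensity (m b c T t : ℝ) : ℝ := m + exp (-b * (t - T)) * (c - m)

section underlyingIntensity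

variable {m b c T : ℝ}

theorem continuous_underlyingIntensity : Continuous (underlyingIntensity m b c T) := by
  unfold underlyingIntensity; fun_prop

theorem hasDerivAt_underlyingIntensity_antiderivative (hb : b ≠ 0) (t : ℝ) :
    HasDerivAt (fun t => m * t - b⁻¹ * (c - m) * exp (-b * (t - T)))
      (underlyingIntensity m b c T t) t := by
  have hexp : HasDerivAt (fun t => exp (-b * (t - T))) (exp (-b * (t - T)) * -b) t := by
    simpa using (((hasDerivAt_id t).sub_const T).const_mul (-b)).exp
  refine (((hasDerivAt_id t).const_mul m).sub (hexp.const_mul (b⁻¹ * (c - m)))).congr_deriv ?_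
  rw [underlyingIntensity]
  field_simp
  ring

theorem integral_underlyingIntensity (hb : b ≠ 0) (a d : ℝ) :
    ∫ t in a..d, underlyingIntensity m b c T t =
      m * (d - a) + b⁻¹ * (c - m) * (exp (-b * (a - T)) - exp (-b * (d - T))) := by
  rw [integral_eq_sub_of_hasDerivAt (fun t _ => hasDerivAt_underlyingIntensity_antiderivative hb t)
    (continuous_underlyingIntensity.intervalIntegrable a d)]
  ring

theorem monotone_underlyingIntensity (hb : 0 ≤ b) (hcm : c ≤ m) :
    Monotone (underlyingIntensity m b c T) := by
  intro s t hst
  have : exp (-b * (t - T)) ≤ exp (-b * (s - T)) := exp_le_exp.mpr (by nlinarith)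
  unfold underlyingIntensity
  nlinarith

theorem underlyingIntensity_nonneg (hm : 0 ≤ m) (hb : 0 ≤ b) (hc : 0 ≤ c) {t : ℝ}
    (ht : T ≤ t) : 0 ≤ underlyingIntensity m b c T t := by
  have hle : exp (-b * (t - T)) ≤ 1 := exp_le_one_iff.mpr (by nlinarith)
  have hpos := exp_pos (-b * (t - T))
  unfold underlyingIntensity
  nlinarith

theorem underlyingIntensity_restart (hm : 0 < m) (hb : b ≠ 0) (hcm : c < m) :
    underlyingIntensity m b c T (T + b⁻¹ * log ((m - c) / m)) = 0 := by
  have hexp : -b * (T + b⁻¹ * log ((m - c) / m) - T) = -log ((m - c) / m) := by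
    field_simp; ring
  have hmc : m - c ≠ 0 := by linarith
  rw [underlyingIntensity, hexp, exp_neg, exp_log (div_pos (by linarith) hm)]
  field_simp
  ring

end underlyingIntensity

/-- Compensator increment for the nonlinear exponential Hawkes process: the
integral of the realized intensity `max(λ*, 0)` over an inter-event interval. -/
theorem nonlinear_compensator_increment
    (m b c Tk Tk1 : ℝ) (hm : 0 < m) (hb : 0 < b) (hT : Tk < Tk1) :
    let Tstar : ℝ :=
      min (Tk + b⁻¹ * Real.log ((m - c) / m) * (if c < 0 then (1 : ℝ) else 0)) Tk1
    ∫ t in Tk..Tk1, max (m + Real.exp (-b * (t - Tk)) * (c - m)) 0 =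
      m * (Tk1 - Tstar) +
        b⁻¹ * (c - m) * (Real.exp (-b * (Tstar - Tk)) - Real.exp (-b * (Tk1 - Tk))) := by
  intro Tstar
  change ∫ t in Tk..Tk1, max (underlyingIntensity m b c Tk t) 0 = _
  rw [← integral_underlyingIntensity hb.ne' Tstar Tk1]
  by_cases hc : c < 0
  · set r := Tk + b⁻¹ * log ((m - c) / m)
    have hTstar : Tstar = min r Tk1 := by simp [Tstar, r, hc]
    have hr : Tk ≤ r := le_add_of_nonneg_right <| mul_nonneg (inv_nonneg.mpr hb.le) <|
      log_nonneg <| (one_le_div hm).mpr (by linarith)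
    have hroot := underlyingIntensity_restart (c := c) (T := Tk) hm hb.ne' (by linarith)
    have hmono := monotone_underlyingIntensity (m := m) (c := c) (T := Tk) hb.le (by linarith)
    refine integral_max_zero_eq_of_sign_change continuous_underlyingIntensity
      (by rw [hTstar]; exact le_min hr hT.le) (min_le_right _ _) (fun t ht => ?_) (fun t ht => ?_)
    · exact (hmono (ht.2.trans (hTstar ▸ min_le_left _ _))).trans hroot.le
    · have hrt : r ≤ t := by
        rcases min_lt_iff.mp (hTstar ▸ ht.1) with h | h
        · exact h.le
        · exact absurd ht.2 h.not_ge
      exact hroot.ge.trans (hmono hrt)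
  · have hTstar : Tstar = Tk := by simp [Tstar, hc, hT.le]
    rw [hTstar]
    exact integral_max_zero_eq_of_sign_change continuous_underlyingIntensity le_rfl hT.le
      (fun t ht => absurd ht.2 ht.1.not_ge)
      (fun t ht => underlyingIntensity_nonneg hm.le hb.le (not_lt.mp hc) ht.1.le)
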